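/- For a simple symmetric random walk S_n = X_1 + ... + X_n with i.i.d. steps X_i uniform on {-1, +1}, and for positive integers m and l, the probability that the first hitting time of level m equals 2l+m is (1/2)^(2l+m) · C(l+m-1, l), where C(n,k) is the Catalan triangle entry (n+k)!(n-k+1)/(k!(n+1)!). -/

import Mathlib

open MeasureTheory ProbabilityTheory

/-- The Catalan triangle entry `C(n,k) = (n+k)! (n-k+1) / (k! (n+1)!)`, as a real number. -/
noncomputable def catalanTriangle (n k : ℕ) : ℝ :=
  ((n + k).factorial * (n - k + 1) : ℕ) / ((k.factorial * (n + 1).factorial : ℕ) : ℝ)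

/-!
Classify the step sequences by their first step: the walk first reaches `m ≠ 0` at time `n + 1`
exactly when, after a first step `±1`, the remaining walk first reaches `m ∓ 1` at time `n`.
Hence the number `H(l, m)` of `±1`-sequences of length `2l + m` that first reach `m ≥ 1` at their
end satisfies `H(l, m) = H(l, m - 1) + H(l - 1, m + 1)`, which is the Pascal-type rule
`C(n, k) = C(n - 1, k) + C(n, k - 1)` of the Catalan triangle, with matching boundary values.
By independence each such sequence has probability `2^-(2l + m)`, and almost surely every step
is `±1`.
-/

open Finset Fintype
open scoped ENNReal

-- The walk with steps `w` reaches `m` at time `n` and not before.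
def FirstHitsAtEnd : {n : ℕ} → (Fin n → ℤ) → ℤ → Prop
  | 0, _, m => m = 0
  | _ + 1, w, m => m ≠ 0 ∧ FirstHitsAtEnd (Fin.tail w) (m - w 0)

theorem firstHitsAtEnd_iff (v : ℕ → ℤ) (n : ℕ) (m : ℤ) :
    FirstHitsAtEnd (fun i : Fin n => v i) m ↔
      ∑ k ∈ range n, v k = m ∧ ∀ j < n, ∑ k ∈ range j, v k ≠ m := by
  induction n generalizing v m with
  | zero => simp [FirstHitsAtEnd, eq_comm]
  | succ n ih =>
    change m ≠ 0 ∧ FirstHitsAtEnd (fun i : Fin n => v (i + 1)) (m - v 0) ↔ _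
    rw [ih (fun k => v (k + 1)), Nat.forall_lt_succ_left']
    simp only [sum_range_succ', sum_range_zero]
    grind

theorem card_filter_piFinset_const_succ {β : Type*} [DecidableEq β] (s : Finset β) {n : ℕ}
    (P : (Fin (n + 1) → β) → Prop) [DecidablePred P] :
    #{w ∈ piFinset fun _ => s | P w} =
      ∑ a ∈ s, #{w ∈ piFinset fun _ : Fin n => s | P (Fin.cons a w)} := by
  rw [card_eq_sum_card_fiberwise (f := fun w => w 0) (t := s) fun w hw => by
    simp only [coe_filter, Set.mem_ofPred_eq, mem_piFinset] at hw; exact hw.1 0]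
  refine sum_congr rfl fun a ha =>
    card_nbij' Fin.tail (fun w : Fin n → β => (Fin.cons a w : Fin (n + 1) → β)) ?_ ?_ ?_ ?_ <;>
    intro w hw <;> simp only [coe_filter, mem_filter, Set.mem_ofPred_eq, mem_piFinset] at hw ⊢
  · obtain ⟨⟨hs, hP⟩, rfl⟩ := hw
    exact ⟨fun i => hs i.succ, by rwa [Fin.cons_self_tail]⟩
  · exact ⟨⟨Fin.forall_fin_succ.2 ⟨by simpa, by simpa using hw.1⟩, hw.2⟩, rfl⟩
  · obtain ⟨-, rfl⟩ := hw
    exact Fin.cons_self_tail w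
  · exact Fin.tail_cons _ _

theorem catalanTriangle_zero_right (n : ℕ) : catalanTriangle n 0 = 1 := by
  rw [catalanTriangle, div_eq_one_iff_eq (by positivity)]
  simp [Nat.factorial_succ, mul_comm]

-- `catalanTriangle_succ_succ` fails at `k = n`: truncated subtraction makes
-- `catalanTriangle n (n + 1)` nonzero.
theorem catalanTriangle_succ_self (n : ℕ) :
    catalanTriangle (n + 1) (n + 1) = catalanTriangle (n + 1) n := by
  simp only [catalanTriangle, Nat.sub_self, show n + 1 - n = 1 by omega,
    show n + 1 + n = 2 * n + 1 by ring, show n + 1 + (n + 1) = 2 * n + 1 + 1 by ring,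
    Nat.factorial_succ]
  push_cast
  field_simp
  ring

theorem catalanTriangle_succ_succ {n k : ℕ} (h : k < n) :
    catalanTriangle (n + 1) (k + 1) = catalanTriangle n (k + 1) + catalanTriangle (n + 1) k := by
  obtain ⟨d, rfl⟩ := Nat.exists_eq_add_of_lt h
  simp only [catalanTriangle, show k + d + 1 + 1 - (k + 1) + 1 = d + 2 by omega,
    show k + d + 1 - (k + 1) + 1 = d + 1 by omega, show k + d + 1 + 1 - k + 1 = d + 3 by omega,
    show k + d + 1 + 1 + (k + 1) = (2 * k + d + 1) + 1 + 1 by ring,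
    show k + d + 1 + (k + 1) = (2 * k + d + 1) + 1 by ring,
    show k + d + 1 + 1 + k = (2 * k + d + 1) + 1 by ring,
    show k + d + 1 + 1 + 1 = (k + d + 1) + 1 + 1 by ring, Nat.factorial_succ]
  push_cast
  field_simp
  ring

open Classical in
noncomputable def firstHitCount (n : ℕ) (m : ℤ) : ℕ :=
  #{w ∈ piFinset fun _ : Fin n => ({1, -1} : Finset ℤ) | FirstHitsAtEnd w m}

theorem firstHitCount_zero (m : ℤ) : firstHitCount 0 m = if m = 0 then 1 else 0 := by
  split_ifs with hm <;> simp [firstHitCount, FirstHitsAtEnd, hm]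

theorem firstHitCount_succ_zero (n : ℕ) : firstHitCount (n + 1) 0 = 0 := by
  classical
  simp [firstHitCount, FirstHitsAtEnd]

theorem firstHitCount_succ {m : ℤ} (hm : m ≠ 0) (n : ℕ) :
    firstHitCount (n + 1) m = firstHitCount n (m - 1) + firstHitCount n (m + 1) := by
  classical
  rw [firstHitCount, card_filter_piFinset_const_succ, sum_pair (by decide)]
  simp [FirstHitsAtEnd, hm, firstHitCount]

theorem firstHitCount_eq_zero_of_lt {n : ℕ} {m : ℤ} (h : n < m) : firstHitCount n m = 0 := by
  induction n generalizing m with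
  | zero => simp [firstHitCount_zero, (show (0 : ℤ) < m by simpa using h).ne']
  | succ n ih => rw [firstHitCount_succ (by omega), ih (by omega), ih (by omega)]

theorem firstHitCount_self (n : ℕ) : firstHitCount n n = 1 := by
  induction n with
  | zero => simp [firstHitCount_zero]
  | succ n ih =>
    rw [Nat.cast_succ, firstHitCount_succ (by omega), add_sub_cancel_right, ih,
      firstHitCount_eq_zero_of_lt (by omega)]

theorem firstHitCount_eq_catalanTriangle (l m : ℕ) :
    (firstHitCount (2 * l + m + 1) (m + 1) : ℝ) = catalanTriangle (l + m) l := by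
  induction l generalizing m with
  | zero => simpa [catalanTriangle_zero_right] using firstHitCount_self (m + 1)
  | succ l ihl =>
    induction m with
    | zero =>
      have hrec : firstHitCount (2 * (l + 1) + 0 + 1) ((0 : ℕ) + 1) =
          firstHitCount (2 * l + 1 + 1) 0 + firstHitCount (2 * l + 1 + 1) ((1 : ℕ) + 1) := by
        rw [show 2 * (l + 1) + 0 + 1 = 2 * l + 1 + 1 + 1 by ring, firstHitCount_succ (by norm_num)]
        norm_num
      rw [hrec, firstHitCount_succ_zero, Nat.cast_add, ihl, Nat.cast_zero, zero_add, add_zero,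
        catalanTriangle_succ_self]
    | succ m ihm =>
      have hrec : firstHitCount (2 * (l + 1) + (m + 1) + 1) ((m + 1 : ℕ) + 1) =
          firstHitCount (2 * (l + 1) + m + 1) (m + 1) +
            firstHitCount (2 * l + (m + 2) + 1) ((m + 2 : ℕ) + 1) := by
        rw [show 2 * (l + 1) + (m + 1) + 1 = 2 * (l + 1) + m + 1 + 1 by ring,
          firstHitCount_succ (by omega)]
        congr 2 <;> push_cast <;> ring
      rw [hrec, Nat.cast_add, ihm, ihl, show l + 1 + (m + 1) = l + m + 1 + 1 by ring,
        catalanTriangle_succ_succ (by omega), show l + (m + 2) = l + m + 1 + 1 by ring,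
        add_right_comm l 1 m]

namespace ProbabilityTheory

variable {Ω ι : Type*} [MeasurableSpace Ω] {μ : Measure Ω}

theorem ae_mem_one_neg_one_of_measure_eq_half [IsProbabilityMeasure μ] {Y : Ω → ℤ}
    (hY : Measurable Y) (hup : μ {ω | Y ω = 1} = 1 / 2) (hdown : μ {ω | Y ω = -1} = 1 / 2) :
    ∀ᵐ ω ∂μ, Y ω ∈ ({1, -1} : Finset ℤ) := by
  have hsplit : {ω | Y ω ∈ ({1, -1} : Finset ℤ)} = {ω | Y ω = 1} ∪ {ω | Y ω = -1} := by
    ext; simp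
  have hdisj : Disjoint {ω | Y ω = 1} {ω | Y ω = -1} :=
    Set.disjoint_left.2 fun ω h1 h2 => by simp_all
  have hmeas : MeasurableSet {ω | Y ω ∈ ({1, -1} : Finset ℤ)} := hY (Finset.measurableSet _)
  rw [ae_iff_measure_eq hmeas.nullMeasurableSet, hsplit,
    measure_union hdisj (hY (measurableSet_singleton _)), hup, hdown, ENNReal.add_halves,
    measure_univ]

theorem iIndepFun.measure_tuple_eq_of_rademacher [Fintype ι] [DecidableEq ι] {X : ι → Ω → ℤ}
    (hindep : iIndepFun X μ)
    (hup : ∀ i, μ {ω | X i ω = 1} = 1 / 2) (hdown : ∀ i, μ {ω | X i ω = -1} = 1 / 2)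
    {w : ι → ℤ} (hw : w ∈ piFinset fun _ => ({1, -1} : Finset ℤ)) :
    μ {ω | (fun i => X i ω) = w} = (1 / 2) ^ card ι := by
  have : {ω | (fun i => X i ω) = w} = ⋂ i ∈ (univ : Finset ι), X i ⁻¹' {w i} := by
    ext; simp [funext_iff]
  rw [this, hindep.measure_inter_preimage_eq_mul _ fun _ _ => measurableSet_singleton _,
    ← Finset.card_univ, ← prod_const]
  refine prod_congr rfl fun i _ => ?_
  rcases mem_insert.1 ((mem_piFinset.1 hw) i) with h | h
  · exact h ▸ hup i
  · exact (mem_singleton.1 h) ▸ hdown i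

theorem iIndepFun.measure_tuple_mem_of_rademacher [IsProbabilityMeasure μ] [Fintype ι]
    [DecidableEq ι] {X : ι → Ω → ℤ} (hindep : iIndepFun X μ) (hmeas : ∀ i, Measurable (X i))
    (hup : ∀ i, μ {ω | X i ω = 1} = 1 / 2) (hdown : ∀ i, μ {ω | X i ω = -1} = 1 / 2)
    (A : Set (ι → ℤ)) [DecidablePred (· ∈ A)] :
    μ {ω | (fun i => X i ω) ∈ A} =
      #{w ∈ piFinset fun _ => ({1, -1} : Finset ℤ) | w ∈ A} * (1 / 2) ^ card ι := by
  set Y : Ω → ι → ℤ := fun ω i => X i ω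
  have hY : Measurable Y := measurable_pi_lambda _ hmeas
  have hae : {ω | Y ω ∈ A} =ᵐ[μ]
      Y ⁻¹' ↑({w ∈ piFinset fun _ : ι => ({1, -1} : Finset ℤ) | w ∈ A}) := by
    filter_upwards [ae_all_iff.2 fun i : ι =>
      ae_mem_one_neg_one_of_measure_eq_half (hmeas i) (hup i) (hdown i)] with ω hω
    change (Y ω ∈ A) = (Y ω ∈ ({w ∈ piFinset fun _ : ι => ({1, -1} : Finset ℤ) | w ∈ A}))
    rw [mem_filter, and_iff_right (mem_piFinset.2 hω)]
  rw [measure_congr hae,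
    ← sum_measure_preimage_singleton _ fun w _ => hY (measurableSet_singleton w)]
  calc _ = ∑ w ∈ {w ∈ piFinset fun _ : ι => ({1, -1} : Finset ℤ) | w ∈ A},
        (1 / 2 : ℝ≥0∞) ^ card ι :=
      sum_congr rfl fun w hw => hindep.measure_tuple_eq_of_rademacher hup hdown (mem_filter.1 hw).1
    _ = _ := by rw [sum_const, nsmul_eq_mul]

end ProbabilityTheory

theorem srw_first_hitting_time_prob_general
    {Ω : Type*} [MeasurableSpace Ω] (μ : Measure Ω) [IsProbabilityMeasure μ]
    (X : ℕ → Ω → ℤ) (hmeas : ∀ i, Measurable (X i))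
    (hindep : iIndepFun X μ)
    (hup : ∀ i, μ {ω | X i ω = 1} = 1 / 2)
    (hdown : ∀ i, μ {ω | X i ω = -1} = 1 / 2)
    (l m : ℕ) (hm : 1 ≤ m) :
    μ {ω | (∑ k ∈ Finset.range (2 * l + m), X k ω) = (m : ℤ) ∧
        ∀ n < 2 * l + m, (∑ k ∈ Finset.range n, X k ω) ≠ (m : ℤ)} =
      ENNReal.ofReal ((1 / 2 : ℝ) ^ (2 * l + m) * catalanTriangle (l + m - 1) l) := by
  obtain ⟨k, rfl⟩ : ∃ k, m = k + 1 := ⟨m - 1, by omega⟩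
  classical
  calc _ = μ {ω | (fun i : Fin (2 * l + k + 1) => X i ω) ∈ {w | FirstHitsAtEnd w (k + 1)}} := by
        congr 1; ext ω; exact (firstHitsAtEnd_iff (X · ω) _ _).symm
    _ = firstHitCount (2 * l + k + 1) (k + 1) * (1 / 2) ^ (2 * l + k + 1) := by
        rw [(hindep.precomp Fin.val_injective).measure_tuple_mem_of_rademacher (fun i => hmeas i)
          (fun i => hup i) (fun i => hdown i), Fintype.card_fin, firstHitCount]
        rfl
    _ = _ := by
        rw [show l + (k + 1) - 1 = l + k by omega, ← firstHitCount_eq_catalanTriangle, ← add_assoc,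
          ENNReal.ofReal_mul (by positivity), ENNReal.ofReal_pow (by norm_num),
          ENNReal.ofReal_natCast, ENNReal.ofReal_div_of_pos two_pos, ENNReal.ofReal_one,
          ENNReal.ofReal_ofNat, mul_comm]

/-- For a simple symmetric random walk `S_n = X_1 + ⋯ + X_n` with i.i.d. steps uniform on
`{-1,+1}`, and positive integers `m, l`, the probability that the first hitting time of level
`m` equals `2l+m` is `(1/2)^(2l+m) C(l+m-1, l)`.  (The event `τ_m = 2l+m` is: `S_{2l+m} = m`
and `S_n ≠ m` for all `n < 2l+m`.) -/
theorem srw_first_hitting_time_prob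
    {Ω : Type*} [MeasurableSpace Ω] (μ : Measure Ω) [IsProbabilityMeasure μ]
    (X : ℕ → Ω → ℤ) (hmeas : ∀ i, Measurable (X i))
    (hindep : iIndepFun X μ)
    (hup : ∀ i, μ {ω | X i ω = 1} = 1 / 2)
    (hdown : ∀ i, μ {ω | X i ω = -1} = 1 / 2)
    (l m : ℕ) (hl : 1 ≤ l) (hm : 1 ≤ m) :
    μ {ω | (∑ k ∈ Finset.range (2 * l + m), X k ω) = (m : ℤ) ∧
        ∀ n < 2 * l + m, (∑ k ∈ Finset.range n, X k ω) ≠ (m : ℤ)} =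
      ENNReal.ofReal ((1 / 2 : ℝ) ^ (2 * l + m) * catalanTriangle (l + m - 1) l) :=
  srw_first_hitting_time_prob_general μ X hmeas hindep hup hdown l m hm
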